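/- Positivity preservation of backward Euler for monotone systems: if A ∈ ℝⁿˣⁿ is an M-matrix (invertible with nonnegative inverse) and M is a diagonal matrix with positive entries, then for any Δt > 0 the matrix M/Δt + A is invertible with nonnegative inverse, and hence the backward Euler step (M/Δt + A) u^{k+1} = (M/Δt) u^k + f with u^k ≥ 0 componentwise and f ≥ 0 componentwise yields u^{k+1} ≥ 0 componentwise. -/
import Mathlib

open Matrix

/-- A Z-matrix with a positive vector mapped to a positive vector is monotone. -/
lemma monotone_of_pos_test {n : ℕ} (B : Matrix (Fin n) (Fin n) ℝ)
    (hoff : ∀ i j, i ≠ j → B i j ≤ 0)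
    (x : Fin n → ℝ) (hx : ∀ i, 0 < x i) (hBx : ∀ i, 0 < B.mulVec x i)
    (v : Fin n → ℝ) (hv : ∀ i, 0 ≤ B.mulVec v i) : ∀ i, 0 ≤ v i := by
  by_contra h
  push_neg at h
  obtain ⟨i, hi⟩ := h
  have hne : (Finset.univ : Finset (Fin n)).Nonempty := ⟨i, Finset.mem_univ i⟩
  obtain ⟨i0, -, hmin⟩ := Finset.exists_min_image Finset.univ (fun j => v j / x j) hne
  set t := v i0 / x i0 with ht
  have htneg : t < 0 :=
    lt_of_le_of_lt (hmin i (Finset.mem_univ i)) (div_neg_of_neg_of_pos hi (hx i))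
  have hvi0 : v i0 = t * x i0 := by
    rw [ht, div_mul_cancel₀ _ (ne_of_gt (hx i0))]
  have hvj : ∀ j, t * x j ≤ v j := by
    intro j
    have h1 := hmin j (Finset.mem_univ j)
    calc t * x j ≤ (v j / x j) * x j := mul_le_mul_of_nonneg_right h1 (le_of_lt (hx j))
    _ = v j := div_mul_cancel₀ _ (ne_of_gt (hx j))
  have key : B.mulVec v i0 ≤ t * B.mulVec x i0 := by
    simp only [Matrix.mulVec, dotProduct]
    rw [Finset.mul_sum]
    apply Finset.sum_le_sum
    intro j _
    by_cases hj : j = i0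
    · subst hj; rw [hvi0]; ring_nf; exact le_refl _
    · have h2 := mul_le_mul_of_nonpos_left (hvj j) (hoff i0 j (Ne.symm hj))
      have h3 : B i0 j * (t * x j) = t * (B i0 j * x j) := by ring
      linarith
  have hneg : t * B.mulVec x i0 < 0 := mul_neg_of_neg_of_pos htneg (hBx i0)
  linarith [hv i0]

/-- Positivity preservation of backward Euler for monotone systems: if `A` is
an M-matrix and `M = diag(d)` with `d > 0`, then for any `Δt > 0` the matrix
`M/Δt + A` is invertible with nonnegative inverse, and the backward Euler step
`(M/Δt + A) u^{k+1} = (M/Δt) u^k + f` preserves componentwise nonnegativity. -/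
theorem backward_euler_positivity
    {n : ℕ} (A : Matrix (Fin n) (Fin n) ℝ)
    (hoff : ∀ i j, i ≠ j → A i j ≤ 0)
    (hinv : IsUnit A) (hinvpos : ∀ i j, 0 ≤ A⁻¹ i j)
    (d : Fin n → ℝ) (hd : ∀ i, 0 < d i)
    (Δt : ℝ) (hΔt : 0 < Δt) :
    IsUnit ((Δt)⁻¹ • Matrix.diagonal d + A) ∧
    (∀ i j, 0 ≤ ((Δt)⁻¹ • Matrix.diagonal d + A)⁻¹ i j) ∧
    (∀ uk f uk1 : Fin n → ℝ, (∀ i, 0 ≤ uk i) → (∀ i, 0 ≤ f i) →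
      ((Δt)⁻¹ • Matrix.diagonal d + A).mulVec uk1
        = ((Δt)⁻¹ • Matrix.diagonal d).mulVec uk + f →
      ∀ i, 0 ≤ uk1 i) := by
  set B : Matrix (Fin n) (Fin n) ℝ := (Δt)⁻¹ • Matrix.diagonal d + A with hB
  -- B has nonpositive off-diagonal entries
  have hBoff : ∀ i j, i ≠ j → B i j ≤ 0 := by
    intro i j hij
    simp [hB, Matrix.diagonal_apply_ne _ hij]
    exact hoff i j hij
  -- the positive test vector x = A⁻¹ 1
  set x : Fin n → ℝ := A⁻¹.mulVec 1 with hxdef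
  have hAinv : A * A⁻¹ = 1 := Matrix.mul_nonsing_inv A ((Matrix.isUnit_iff_isUnit_det A).mp hinv)
  have hAinvA : A⁻¹ * A = 1 := Matrix.nonsing_inv_mul A ((Matrix.isUnit_iff_isUnit_det A).mp hinv)
  have hxpos : ∀ i, 0 < x i := by
    intro i
    have hrow : ∃ j, 0 < A⁻¹ i j := by
      by_contra hc
      push_neg at hc
      have hzero : ∀ j, A⁻¹ i j = 0 := fun j => le_antisymm (hc j) (hinvpos i j)
      have h1 : (A⁻¹ * A) i i = 1 := by rw [hAinvA]; simp
      simp [Matrix.mul_apply, hzero] at h1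
    obtain ⟨j, hj⟩ := hrow
    have : x i = ∑ k, A⁻¹ i k := by
      simp [hxdef, Matrix.mulVec, dotProduct]
    rw [this]
    exact Finset.sum_pos' (fun k _ => hinvpos i k) ⟨j, Finset.mem_univ j, hj⟩
  have hAx : A.mulVec x = 1 := by
    rw [hxdef, Matrix.mulVec_mulVec, hAinv, Matrix.one_mulVec]
  have hBx : ∀ i, 0 < B.mulVec x i := by
    intro i
    have : B.mulVec x = ((Δt)⁻¹ • Matrix.diagonal d).mulVec x + A.mulVec x := by
      rw [hB, Matrix.add_mulVec]
    rw [this]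
    have hD : ((Δt)⁻¹ • Matrix.diagonal d).mulVec x i = (Δt)⁻¹ * (d i * x i) := by
      rw [Matrix.smul_mulVec]
      simp [Matrix.mulVec_diagonal]
    simp only [Pi.add_apply, hD, hAx, Pi.one_apply]
    have h1 : 0 ≤ (Δt)⁻¹ * (d i * x i) :=
      mul_nonneg (le_of_lt (inv_pos.mpr hΔt)) (mul_nonneg (le_of_lt (hd i)) (le_of_lt (hxpos i)))
    linarith
  -- monotonicity of B
  have hmono := monotone_of_pos_test B hBoff x hxpos hBx
  -- B is a unit
  have hBunit : IsUnit B := by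
    rw [← Matrix.mulVec_injective_iff_isUnit]
    intro u w huw
    have h1 : ∀ i, 0 ≤ (u - w) i := by
      apply hmono
      intro i
      have : B.mulVec (u - w) = 0 := by
        rw [Matrix.mulVec_sub, huw, sub_self]
      rw [this]; simp
    have h2 : ∀ i, 0 ≤ (w - u) i := by
      apply hmono
      intro i
      have : B.mulVec (w - u) = 0 := by
        rw [Matrix.mulVec_sub, huw, sub_self]
      rw [this]; simp
    funext i
    have := h1 i; have := h2 i
    simp only [Pi.sub_apply] at *
    linarith
  refine ⟨hBunit, ?_, ?_⟩
  · intro i j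
    have hBBinv : B * B⁻¹ = 1 := Matrix.mul_nonsing_inv B ((Matrix.isUnit_iff_isUnit_det B).mp hBunit)
    have hcol := hmono (B⁻¹.mulVec (Pi.single j 1)) ?_
    · have : B⁻¹.mulVec (Pi.single j 1) i = B⁻¹ i j := by
        simp [Matrix.mulVec_single]
      rw [← this]; exact hcol i
    · intro k
      rw [Matrix.mulVec_mulVec, hBBinv, Matrix.one_mulVec]
      by_cases hkj : k = j <;> simp [Pi.single_apply, hkj]
  · intro uk f uk1 huk hf heq
    apply hmono
    intro i
    rw [heq]
    have hD : ((Δt)⁻¹ • Matrix.diagonal d).mulVec uk i = (Δt)⁻¹ * (d i * uk i) := by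
      rw [Matrix.smul_mulVec]
      simp [Matrix.mulVec_diagonal]
    simp only [Pi.add_apply, hD]
    have : 0 ≤ (Δt)⁻¹ * (d i * uk i) :=
      mul_nonneg (le_of_lt (inv_pos.mpr hΔt)) (mul_nonneg (le_of_lt (hd i)) (huk i))
    linarith [hf i]
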